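/- arXiv:math/0401141 — 3 statements merged into one kernel-verified Lean document; each statement's English description precedes it below -/
import Mathlib

section
/- For k ≥ 1 and j ∈ {1,...,m}, let l(k,j) be the largest index k' ≤ k with h_{k'} = j, or 0 if no such k' exists. Then the j-th column (P_{k-1,j}; Q_{k-1,j}) of B_k (excluding the last column) equals (p_{l(k,j)-1}; q_{l(k,j)-1}) if l(k,j) ≥ 1, and equals (e_j; 0) if l(k,j) = 0, where e_j is the j-th standard unit column vector. -/
open Polynomial

noncomputable section

variable {F : Type*} [Field F] {m : ℕ}

/-- An `m`-pre-continued fraction `[a_0, h_1, a_1, h_2, a_2, …]` with `a_0 = 0`.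
(`h 0` is irrelevant.) -/
structure MPreCF (F : Type*) [Field F] (m : ℕ) where
  h : ℕ → Fin m
  a : ℕ → Fin m → Polynomial F
  a_zero : a 0 = 0

/-- `E_h`: the identity matrix of order `m+1` with columns `h` and `m+1` exchanged. -/
def Emat (h : Fin m) : Matrix (Fin (m + 1)) (Fin (m + 1)) (Polynomial F) :=
  (1 : Matrix (Fin (m + 1)) (Fin (m + 1)) (Polynomial F)).submatrix id
    (Equiv.swap h.castSucc (Fin.last m))

/-- `A(a) = [[I_m, a], [0, 1]]`. -/
def Amat (a : Fin m → Polynomial F) : Matrix (Fin (m + 1)) (Fin (m + 1)) (Polynomial F) :=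
  Matrix.of fun i j =>
    if j = Fin.last m then (if hi : i = Fin.last m then 1 else a (i.castPred hi))
    else if i = j then 1 else 0

/-- `B_0 = I`, `B_k = B_{k-1} E_{h_k} A(a_k)`. -/
def MPreCF.B (C : MPreCF F m) : ℕ → Matrix (Fin (m + 1)) (Fin (m + 1)) (Polynomial F)
  | 0 => 1
  | k + 1 => MPreCF.B C k * Emat (C.h (k + 1)) * Amat (C.a (k + 1))

/-- `p_k`: the top `m` entries of the last column of `B_k`. -/
def MPreCF.p (C : MPreCF F m) (k : ℕ) (i : Fin m) : Polynomial F :=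
  C.B k i.castSucc (Fin.last m)

/-- `q_k`: the last entry of the last column of `B_k`. -/
def MPreCF.q (C : MPreCF F m) (k : ℕ) : Polynomial F :=
  C.B k (Fin.last m) (Fin.last m)


lemma step (C : MPreCF F m) (k : ℕ) (j : Fin m) (i : Fin (m+1)) :
    C.B (k+1) i j.castSucc
      = C.B k i (Equiv.swap (C.h (k+1)).castSucc (Fin.last m) j.castSucc) := by
  simp only [MPreCF.B]
  rw [Matrix.mul_apply]
  have hne : j.castSucc ≠ Fin.last m := (Fin.castSucc_lt_last j).ne
  simp only [Amat, Matrix.of_apply, hne, if_false, mul_ite, mul_one, mul_zero,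
    Finset.sum_ite_eq', Finset.mem_univ, if_true]
  rw [Matrix.mul_apply]
  simp [Emat, Matrix.one_apply, Matrix.submatrix_apply]

lemma step' (C : MPreCF F m) (k : ℕ) (j : Fin m) (i : Fin (m+1)) :
    C.B (k+1) i j.castSucc
      = if C.h (k+1) = j then C.B k i (Fin.last m) else C.B k i j.castSucc := by
  rw [step]
  rcases eq_or_ne (C.h (k+1)) j with h | h
  · simp [h, Equiv.swap_apply_left]
  · rw [Equiv.swap_apply_of_ne_of_ne, if_neg h]
    · exact fun hc => h (Fin.castSucc_injective m hc).symm
    · exact (Fin.castSucc_lt_last j).ne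

lemma main (C : MPreCF F m) (j : Fin m) : ∀ k : ℕ,
    (∀ l : ℕ, 1 ≤ l → l ≤ k → C.h l = j → (∀ k', l < k' → k' ≤ k → C.h k' ≠ j) →
      ∀ i : Fin (m + 1), C.B k i j.castSucc = C.B (l - 1) i (Fin.last m)) ∧
    ((∀ k', 1 ≤ k' → k' ≤ k → C.h k' ≠ j) →
      ∀ i : Fin (m + 1), C.B k i j.castSucc = if i = j.castSucc then 1 else 0) := by
  intro k
  induction k with
  | zero =>
      refine ⟨fun l hl hl0 => absurd (hl.trans hl0) (by norm_num), fun _ i => ?_⟩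
      simp [MPreCF.B, Matrix.one_apply]
  | succ k ih =>
      constructor
      · intro l hl1 hlk hlj hlast i
        rcases eq_or_lt_of_le hlk with rfl | hlt
        · rw [step', if_pos hlj]
          simp
        · have hlk' : l ≤ k := Nat.lt_succ_iff.mp hlt
          have hne : C.h (k+1) ≠ j := hlast (k+1) (Nat.lt_succ_of_le hlk') le_rfl
          rw [step', if_neg hne]
          exact ih.1 l hl1 hlk' hlj (fun k' h1 h2 => hlast k' h1 (h2.trans (Nat.le_succ k))) i
      · intro hnone i
        have hne : C.h (k+1) ≠ j := hnone (k+1) (Nat.le_add_left 1 k) le_rfl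
        rw [step', if_neg hne]
        exact ih.2 (fun k' h1 h2 => hnone k' h1 (h2.trans (Nat.le_succ k))) i

/-- Columns `1,…,m` of `B_k`: letting `l(k,j)` be the largest `1 ≤ k' ≤ k` with
`h_{k'} = j` (or `0` if none), the `j`-th column `(P_{k-1,j}; Q_{k-1,j})` of `B_k`
equals `(p_{l(k,j)-1}; q_{l(k,j)-1})` if `l(k,j) ≥ 1`, and `(e_j; 0)` if `l(k,j) = 0`. -/
theorem stmt9 (F : Type*) [Field F] (m : ℕ) (C : MPreCF F m) (k : ℕ) (hk : 1 ≤ k)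
    (j : Fin m) :
    (∀ l : ℕ, 1 ≤ l → l ≤ k → C.h l = j → (∀ k', l < k' → k' ≤ k → C.h k' ≠ j) →
      ∀ i : Fin (m + 1), C.B k i j.castSucc = C.B (l - 1) i (Fin.last m)) ∧
    ((∀ k', 1 ≤ k' → k' ≤ k → C.h k' ≠ j) →
      ∀ i : Fin (m + 1), C.B k i j.castSucc = if i = j.castSucc then 1 else 0) := by
  exact main C j k

end
end

section
/- Let C be an m-continued fraction (an m-pre-continued fraction satisfying Conditions 1–3). Then deg(q_k(z)) = d_k for all k ≥ 0, where d_k = t_1 + ... + t_k and t_i = deg(a_{i,h_i}(z)). -/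
open Polynomial HahnSeries

noncomputable section

variable {F : Type*} [Field F] {m : ℕ}

/-- `z = X⁻¹` viewed in `F((z⁻¹)) = F((X))`. -/
def zed (F : Type*) [Field F] : LaurentSeries F := HahnSeries.single (-1 : ℤ) 1

/-- Embedding of `F[z]` into `F((z⁻¹))`. -/
def Zpoly (p : Polynomial F) : LaurentSeries F := Polynomial.aeval (zed F) p

/-- Componentwise polynomial part `⌊·⌋` (terms with nonnegative powers of `z`). -/
def polyPart (f : LaurentSeries F) : LaurentSeries F where
  coeff n := if n ≤ 0 then f.coeff n else 0
  isPWO_support' := f.isPWO_support'.mono (fun n hn => by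
    simp only [Function.mem_support, ne_eq] at hn ⊢
    by_cases h : n ≤ 0
    · simpa [h] using hn
    · simp [h] at hn)

/-- Fractional part `{·}` (strictly negative powers of `z`). -/
def fracPart (f : LaurentSeries F) : LaurentSeries F := f - polyPart f

/-- Valuation with values in `WithTop ℤ`. -/
def vW (f : LaurentSeries F) : WithTop ℤ := open Classical in if f = 0 then ⊤ else (f.order : WithTop ℤ)

/-- Valuation of a vector: the minimum of component valuations. -/
def vV (r : Fin m → LaurentSeries F) : WithTop ℤ := Finset.univ.inf fun i => vW (r i)

/-- Indexed valuation of one component paired with its index. -/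
def ivc (f : LaurentSeries F) (i : Fin m) : WithTop (Lex (ℤ × Fin m)) :=
  open Classical in if f = 0 then ⊤ else ↑(toLex (f.order, i))

/-- The indexed valuation `Iv` on `F((z⁻¹))^m`, with `Iv 0 = ⊤`. -/
def Iv (r : Fin m → LaurentSeries F) : WithTop (Lex (ℤ × Fin m)) :=
  Finset.univ.inf fun i => ivc (r i) i


/-- `t_k = deg(a_{k,h_k})`. -/
def MPreCF.t (C : MPreCF F m) (k : ℕ) : ℕ := (C.a k (C.h k)).natDegree

/-- `d_k = t_1 + ⋯ + t_k`. -/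
def MPreCF.d (C : MPreCF F m) (k : ℕ) : ℕ := ∑ i ∈ Finset.Icc 1 k, C.t i

/-- `v_{k,j} = ∑_{i ≤ k, h_i = j} t_i`. -/
def MPreCF.vkj (C : MPreCF F m) (k : ℕ) (j : Fin m) : ℕ :=
  ∑ i ∈ Finset.Icc 1 k, if C.h i = j then C.t i else 0

/-- `v_k = v_{k,h_k}`. -/
def MPreCF.vk (C : MPreCF F m) (k : ℕ) : ℕ := C.vkj k (C.h k)

/-- `n_k = d_{k-1} + v_k`. -/
def MPreCF.n (C : MPreCF F m) (k : ℕ) : ℕ := C.d (k - 1) + C.vk k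

/-- The vector `D_k a_k`, where `D_k = Diag(z^{-v_{k,1}}, …, z^{-v_{k,m}})`
(note `z^{-v} = X^v` in `F((X)) = F((z⁻¹))`). -/
def MPreCF.Dmulak (C : MPreCF F m) (k : ℕ) : Fin m → LaurentSeries F :=
  fun j => HahnSeries.single ((C.vkj k j : ℤ)) 1 * Zpoly (C.a k j)

/-- An `m`-continued fraction: an `m`-pre-continued fraction of length `ω`
(a positive integer or `∞`) satisfying Conditions 1–3. -/
structure MCF (F : Type*) [Field F] (m : ℕ) extends MPreCF F m where
  ω : ℕ∞
  ω_pos : 1 ≤ ω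
  cond1 : ∀ k : ℕ, 1 ≤ k → (k : ℕ∞) < ω → 1 ≤ (a k (h k)).natDegree
  cond2 : ∀ k : ℕ, 1 ≤ k → (k : ℕ∞) + 1 < ω →
    toLex (((toMPreCF.vkj (k - 1) (h k) : ℤ)), h k) <
      toLex (((toMPreCF.vk (k + 1) : ℤ)), h (k + 1))
  cond3 : ∀ k : ℕ, 1 ≤ k → (k : ℕ∞) < ω →
    Iv (toMPreCF.Dmulak k) = ↑(toLex (((toMPreCF.vkj (k - 1) (h k) : ℤ)), h k))

/-- `r` is the limit of the approximants `p_k/q_k` (for infinite length):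
the valuation of `r - p_k/q_k` tends to `∞`. -/
def MCF.IsLimit (C : MCF F m) (r : Fin m → LaurentSeries F) : Prop :=
  ∀ N : ℤ, ∃ K : ℕ, ∀ k ≥ K,
    (N : WithTop ℤ) < vV (fun i => r i - Zpoly (C.toMPreCF.p k i) / Zpoly (C.toMPreCF.q k))

/-- `r = φ(C)`: the last approximant when `ω < ∞`, and the limit of the
approximants when `ω = ∞`. -/
def MCF.Represents (C : MCF F m) (r : Fin m → LaurentSeries F) : Prop :=
  (C.ω = ⊤ → C.IsLimit r) ∧
  (∀ w : ℕ, C.ω = (w : ℕ∞) →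
    ∀ i, r i = Zpoly (C.toMPreCF.p (w - 1) i) / Zpoly (C.toMPreCF.q (w - 1)))

/-!
Write `Q_{k,j}` for the entry of the last row of `B_k` in column `j`. Multiplying by
`E_h A(a)` gives `Q_{k+1,h_{k+1}} = q_k`, `Q_{k+1,j} = Q_{k,j}` otherwise, and
`q_{k+1} = q_k a_{k+1,h_{k+1}} + Q_{k,h_{k+1}} + ∑_{j ≠ h_{k+1}} Q_{k+1,j} a_{k+1,j}`.
By induction every nonzero `Q_{k,j}` satisfies `(deg Q_{k,j} + v_{k,j}, j) ≤ (n_k, h_k)`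
lexicographically, because Condition 2, shifted by `d_k`, says that the pairs `(n_k, h_k)` increase.
Condition 3 gives `(v_{k,h_{k+1}}, h_{k+1}) ≤ (v_{k+1,j} - deg a_{k+1,j}, j)`, and adding the two
lexicographic inequalities (the ties cannot both occur since `j ≠ h_{k+1}`) shows that every term
except `q_k a_{k+1,h_{k+1}}` has degree `< d_k + t_{k+1} = d_{k+1}`.
-/

theorem zed_pow (n : ℕ) : zed F ^ n = single (-(n : ℤ)) (1 : F) := by
  simp [zed, single_pow]

theorem Zpoly_monomial (n : ℕ) (c : F) : Zpoly (monomial n c) = single (-(n : ℤ)) c := by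
  rw [Zpoly, aeval_monomial, zed_pow, algebraMap_apply', ← PowerSeries.C_eq_algebraMap,
    ofPowerSeries_C, C_apply, single_mul_single]
  simp

theorem coeff_Zpoly_neg (p : F[X]) (n : ℕ) : (Zpoly p).coeff (-(n : ℤ)) = p.coeff n := by
  induction p using Polynomial.induction_on' with
  | add p q hp hq => simp_all [Zpoly]
  | monomial k c =>
    rw [Zpoly_monomial, coeff_monomial, coeff_single]
    simp [eq_comm]

theorem Zpoly_ne_zero {p : F[X]} (hp : p ≠ 0) : Zpoly p ≠ 0 := fun h => by
  have := coeff_Zpoly_neg p p.natDegree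
  rw [h, HahnSeries.coeff_zero, coeff_natDegree, eq_comm, Polynomial.leadingCoeff_eq_zero] at this
  exact hp this

theorem order_Zpoly {p : F[X]} (hp : p ≠ 0) : (Zpoly p).order = -(p.natDegree : ℤ) := by
  refine le_antisymm (order_le_of_coeff_ne_zero ?_) ((le_order_iff_forall (Zpoly_ne_zero hp)).2 ?_)
  · rwa [coeff_Zpoly_neg, coeff_natDegree, Polynomial.leadingCoeff_ne_zero]
  · intro j hj
    obtain ⟨n, rfl⟩ : ∃ n : ℕ, j = -(n : ℤ) := ⟨(-j).toNat, by omega⟩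
    rw [coeff_Zpoly_neg]
    exact coeff_eq_zero_of_natDegree_lt (by omega)

theorem add_lt_add_of_toLex_le {α ι : Type*} [AddCommMonoid α] [LinearOrder α]
    [IsOrderedCancelAddMonoid α] [LinearOrder ι] {a b c d : α} {i j : ι} (hij : i ≠ j)
    (h₁ : toLex (a, i) ≤ toLex (b, j)) (h₂ : toLex (c, j) ≤ toLex (d, i)) : a + c < b + d := by
  rw [Prod.Lex.toLex_le_toLex] at h₁ h₂
  rcases h₁ with h₁ | ⟨rfl, hij'⟩
  · exact add_lt_add_of_lt_of_le h₁ (h₂.elim le_of_lt fun h => h.1.le)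
  · rcases h₂ with h₂ | ⟨-, hji⟩
    · exact (add_lt_add_iff_left a).2 h₂
    · exact absurd (le_antisymm hij' hji) hij

theorem toLex_add_lt_toLex_add {α ι : Type*} [AddCommMonoid α] [LinearOrder α]
    [IsOrderedCancelAddMonoid α] [LinearOrder ι] {a b : α} {i j : ι} (c : α)
    (h : toLex (a, i) < toLex (b, j)) : toLex (c + a, i) < toLex (c + b, j) := by
  rw [Prod.Lex.toLex_lt_toLex] at h ⊢
  simpa using h

theorem mul_Emat (h : Fin m) (M : Matrix (Fin (m + 1)) (Fin (m + 1)) F[X]) :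
    M * Emat h = M.submatrix id (Equiv.swap h.castSucc (Fin.last m)) := by
  rw [Emat, ← Equiv.coe_refl, Matrix.mul_submatrix_one]
  rfl

@[simp] theorem Amat_castSucc_castSucc (a : Fin m → F[X]) (i j : Fin m) :
    Amat a i.castSucc j.castSucc = if i = j then 1 else 0 := by
  simp [Amat, (Fin.castSucc_lt_last j).ne]

@[simp] theorem Amat_last_castSucc (a : Fin m → F[X]) (j : Fin m) :
    Amat a (Fin.last m) j.castSucc = 0 := by
  simp [Amat, (Fin.castSucc_lt_last j).ne, (Fin.castSucc_lt_last j).ne']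

@[simp] theorem Amat_castSucc_last (a : Fin m → F[X]) (i : Fin m) :
    Amat a i.castSucc (Fin.last m) = a i := by
  simp [Amat, (Fin.castSucc_lt_last i).ne]

@[simp] theorem Amat_last_last (a : Fin m → F[X]) : Amat a (Fin.last m) (Fin.last m) = 1 := by
  simp [Amat]

namespace MPreCF

variable (C : MPreCF F m)

def Q (k : ℕ) (j : Fin m) : F[X] := C.B k (Fin.last m) j.castSucc

theorem B_succ_last_apply (k : ℕ) (j : Fin (m + 1)) :
    C.B (k + 1) (Fin.last m) j = (∑ i : Fin m, (if i = C.h (k + 1) then C.q k else C.Q k i) *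
      Amat (C.a (k + 1)) i.castSucc j) + C.Q k (C.h (k + 1)) * Amat (C.a (k + 1)) (Fin.last m) j := by
  rw [B, mul_Emat, Matrix.mul_apply, Fin.sum_univ_castSucc]
  congr 1
  · refine Finset.sum_congr rfl fun i _ => ?_
    split_ifs with hi
    · subst hi; simp [q]
    · rw [Matrix.submatrix_apply, Equiv.swap_apply_of_ne_of_ne
        (fun h => hi (Fin.castSucc_injective m h)) (Fin.castSucc_lt_last i).ne]
      rfl
  · simp [Q]

theorem Q_zero (j : Fin m) : C.Q 0 j = 0 :=
  Matrix.one_apply_ne (Fin.castSucc_lt_last j).ne.symm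

theorem q_zero : C.q 0 = 1 := Matrix.one_apply_eq _

theorem Q_succ (k : ℕ) (j : Fin m) :
    C.Q (k + 1) j = if j = C.h (k + 1) then C.q k else C.Q k j := by
  simp [Q, B_succ_last_apply]

theorem q_succ (k : ℕ) :
    C.q (k + 1) = ∑ i, C.Q (k + 1) i * C.a (k + 1) i + C.Q k (C.h (k + 1)) := by
  simp [q, B_succ_last_apply, Q_succ]

theorem vkj_succ (k : ℕ) (j : Fin m) :
    C.vkj (k + 1) j = C.vkj k j + if C.h (k + 1) = j then C.t (k + 1) else 0 := by
  rw [vkj, vkj, Finset.sum_Icc_succ_top (by omega)]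

theorem d_succ (k : ℕ) : C.d (k + 1) = C.d k + C.t (k + 1) := by
  rw [d, d, Finset.sum_Icc_succ_top (by omega)]

theorem n_succ (k : ℕ) : C.n (k + 1) = C.d (k + 1) + C.vkj k (C.h (k + 1)) := by
  rw [n, vk, vkj_succ, if_pos rfl, d_succ, Nat.add_sub_cancel]
  ring

theorem order_Dmulak {k : ℕ} {j : Fin m} (ha : C.a k j ≠ 0) :
    (C.Dmulak k j).order = C.vkj k j - (C.a k j).natDegree := by
  rw [Dmulak, order_mul (single_ne_zero one_ne_zero) (Zpoly_ne_zero ha),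
    order_single one_ne_zero, order_Zpoly ha, sub_eq_add_neg]

/-- The weight of `Q_{k,j}` is `(deg Q_{k,j} + v_{k,j}, j)`; for `k ≥ 1` the bound is attained
at `j = h_k`, where `Q_{k,h_k} = q_{k-1}`. -/
def WeightLE (k : ℕ) : Prop :=
  ∀ j, C.Q k j ≠ 0 → toLex ((C.Q k j).natDegree + (C.vkj k j : ℤ), j) ≤ toLex ((C.n k : ℤ), C.h k)

end MPreCF

namespace MCF

variable (C : MCF F m)

theorem a_ne_zero {k : ℕ} (hk : ((k + 1 : ℕ) : ℕ∞) < C.ω) : C.a (k + 1) (C.h (k + 1)) ≠ 0 := by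
  intro h0
  simpa [h0] using C.cond1 (k + 1) (by omega) hk

theorem toLex_le_of_cond3 {k : ℕ} (hk : ((k + 1 : ℕ) : ℕ∞) < C.ω) {j : Fin m}
    (ha : C.a (k + 1) j ≠ 0) :
    toLex ((C.vkj k (C.h (k + 1)) : ℤ), C.h (k + 1)) ≤
      toLex ((C.vkj (k + 1) j : ℤ) - (C.a (k + 1) j).natDegree, j) := by
  have hle : Iv (C.Dmulak (k + 1)) ≤ ivc (C.Dmulak (k + 1) j) j :=
    Finset.inf_le (Finset.mem_univ j)
  have hne : C.Dmulak (k + 1) j ≠ 0 :=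
    mul_ne_zero (single_ne_zero one_ne_zero) (Zpoly_ne_zero ha)
  rw [C.cond3 (k + 1) (by omega) hk, ivc, if_neg hne, C.order_Dmulak ha,
    Nat.add_sub_cancel] at hle
  exact WithTop.coe_le_coe.1 hle

theorem n_lt_n_succ {k : ℕ} (hk : 1 ≤ k) (hω : ((k + 1 : ℕ) : ℕ∞) < C.ω) :
    toLex ((C.n k : ℤ), C.h k) < toLex ((C.n (k + 1) : ℤ), C.h (k + 1)) := by
  obtain ⟨k, rfl⟩ : ∃ k', k = k' + 1 := ⟨k - 1, by omega⟩
  have h2 := toLex_add_lt_toLex_add (C.d (k + 1) : ℤ) (C.cond2 (k + 1) hk (by simpa using hω))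
  rw [Nat.add_sub_cancel] at h2
  rw [C.n_succ, MPreCF.n, Nat.add_sub_cancel]
  exact_mod_cast h2

theorem weight_lt_n_succ {k : ℕ} (hω : ((k + 1 : ℕ) : ℕ∞) < C.ω) (hW : C.WeightLE k)
    {j : Fin m} (hQ : C.Q k j ≠ 0) :
    toLex ((C.Q k j).natDegree + (C.vkj k j : ℤ), j) <
      toLex ((C.n (k + 1) : ℤ), C.h (k + 1)) := by
  rcases Nat.eq_zero_or_pos k with rfl | hk
  · exact absurd (C.Q_zero j) hQ
  · exact (hW j hQ).trans_lt (C.n_lt_n_succ hk hω)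

theorem weightLE_succ {k : ℕ} (hω : ((k + 1 : ℕ) : ℕ∞) < C.ω) (hq : (C.q k).natDegree = C.d k)
    (hW : C.WeightLE k) : C.WeightLE (k + 1) := by
  intro j hQ
  by_cases hj : j = C.h (k + 1)
  · subst hj
    rw [C.Q_succ, if_pos rfl, hq, MPreCF.n, MPreCF.vk, Nat.add_sub_cancel]
    push_cast
    rfl
  · rw [C.Q_succ, if_neg hj] at hQ ⊢
    rw [C.vkj_succ, if_neg (Ne.symm hj), add_zero]
    exact (C.weight_lt_n_succ hω hW hQ).le

theorem degree_Q_lt {k : ℕ} (hω : ((k + 1 : ℕ) : ℕ∞) < C.ω) (hW : C.WeightLE k) :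
    (C.Q k (C.h (k + 1))).degree < C.d (k + 1) := by
  by_cases hQ : C.Q k (C.h (k + 1)) = 0
  · simp [hQ]
  have h := (Prod.Lex.toLex_lt_toLex.1 (C.weight_lt_n_succ hω hW hQ)).resolve_right
    (fun h => lt_irrefl _ h.2)
  rw [C.n_succ] at h
  rw [degree_eq_natDegree hQ]
  exact_mod_cast (by push_cast at h; omega : (C.Q k (C.h (k + 1))).natDegree < C.d (k + 1))

theorem degree_Q_mul_a_lt {k : ℕ} (hω : ((k + 1 : ℕ) : ℕ∞) < C.ω) (hW : C.WeightLE (k + 1))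
    {j : Fin m} (hj : j ≠ C.h (k + 1)) :
    (C.Q (k + 1) j * C.a (k + 1) j).degree < C.d (k + 1) := by
  by_cases hQ : C.Q (k + 1) j = 0
  · simp [hQ]
  by_cases ha : C.a (k + 1) j = 0
  · simp [ha]
  have h := add_lt_add_of_toLex_le hj (hW j hQ) (C.toLex_le_of_cond3 hω ha)
  rw [C.n_succ] at h
  rw [degree_mul, degree_eq_natDegree hQ, degree_eq_natDegree ha]
  exact_mod_cast (by push_cast at h; omega :
    (C.Q (k + 1) j).natDegree + (C.a (k + 1) j).natDegree < C.d (k + 1))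

theorem degree_q_succ {k : ℕ} (hω : ((k + 1 : ℕ) : ℕ∞) < C.ω) (hq : (C.q k).degree = C.d k)
    (hW : C.WeightLE k) (hW_succ : C.WeightLE (k + 1)) : (C.q (k + 1)).degree = C.d (k + 1) := by
  have hlead : (C.q k * C.a (k + 1) (C.h (k + 1))).degree = C.d (k + 1) := by
    rw [degree_mul, hq, degree_eq_natDegree (C.a_ne_zero hω), C.d_succ]
    rfl
  have hrest : ∑ j ∈ Finset.univ.erase (C.h (k + 1)), C.Q (k + 1) j * C.a (k + 1) j
      + C.Q k (C.h (k + 1)) ∈ degreeLT F (C.d (k + 1)) :=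
    add_mem (Submodule.sum_mem _ fun j hj =>
        mem_degreeLT.2 (C.degree_Q_mul_a_lt hω hW_succ (Finset.ne_of_mem_erase hj)))
      (mem_degreeLT.2 (C.degree_Q_lt hω hW))
  rw [C.q_succ, ← Finset.add_sum_erase _ _ (Finset.mem_univ _), C.Q_succ, if_pos rfl, add_assoc,
    degree_add_eq_left_of_degree_lt (hlead ▸ mem_degreeLT.1 hrest), hlead]

theorem degree_q_and_weightLE (k : ℕ) (hk : (k : ℕ∞) < C.ω) :
    (C.q k).degree = C.d k ∧ C.WeightLE k := by
  induction k with
  | zero => exact ⟨by simp [MPreCF.q_zero, MPreCF.d], fun j hQ => absurd (C.Q_zero j) hQ⟩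
  | succ k ih =>
    obtain ⟨hq, hW⟩ := ih (lt_of_le_of_lt (by simp) hk)
    have hW_succ := C.weightLE_succ hk (natDegree_eq_of_degree_eq_some hq) hW
    exact ⟨C.degree_q_succ hk hq hW hW_succ, hW_succ⟩

end MCF

/-- For an `m`-continued fraction, `deg(q_k) = d_k` for all `0 ≤ k < ω`. -/
theorem stmt10 (F : Type*) [Field F] (m : ℕ) (C : MCF F m) (k : ℕ)
    (hk : (k : ℕ∞) < C.ω) :
    (C.toMPreCF.q k).degree = ((C.toMPreCF.d k : ℕ) : WithBot ℕ) :=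
  (C.degree_q_and_weightLE k hk).1

end
end

section
/- Every base matrix R (an m×m matrix over F((z^{-1})) whose j-th column is nonzero with index j) is invertible, and for all r ∈ F((z^{-1}))^m, Iv(R·r) = Iv(Δ·r), where Δ is the D-component of R, i.e. the diagonal matrix Diag(z^{-c_1},...,z^{-c_m}) with c_j the valuation of the j-th column of R. -/
/-!
For a fixed index `i`, `f ↦ ivc f i` is the `z⁻¹`-adic valuation followed by the order embedding
`w ↦ (w, i)` into `ℤ ×ₗ Fin m`, so it is ultrametric. The base-matrix condition on column `j`
says `(c j, j) ≤ ivc (R i j) i`, with equality for `i = j` and strict inequality otherwise;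
multiplying by `r j` shifts both sides by `v(r j)`. Hence every term of
`(R r)_i = ∑ j, R i j * r j` has `ivc (R i j * r j) i ≥ ivc ((Δ r)_j) j ≥ Iv (Δ r)`, which gives
`Iv (R r) ≥ Iv (Δ r)`; at an index `k` where `Iv (Δ r)` is attained the inequality is strict for
every nonzero term `j ≠ k`, so the diagonal term alone determines `ivc ((R r)_k) k = Iv (Δ r)`.
Finally `R r = 0` forces `Iv (Δ r) = ⊤`, i.e. `r = 0`, so `R` is invertible.
-/

open Polynomial HahnSeries

noncomputable section

variable {F : Type*} [Field F] {m : ℕ}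

/-- `R` is a base matrix with column valuations `c`: each column `j` is nonzero,
has index `j`, and valuation `c j` (so its `D`-component is `Diag(z^{-c_1},…,z^{-c_m})`). -/
def IsBaseMatrix (R : Matrix (Fin m) (Fin m) (LaurentSeries F)) (c : Fin m → ℤ) : Prop :=
  ∀ j : Fin m, Iv (fun i => R i j) = ↑(toLex (c j, j))

/-- Multiplication by the `D`-matrix `Δ = Diag(z^{-c_1},…,z^{-c_m})`
(note `z^{-c} = X^c` in `F((X)) = F((z⁻¹))`). -/
def Dmul (c : Fin m → ℤ) (r : Fin m → LaurentSeries F) : Fin m → LaurentSeries F :=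
  fun j => HahnSeries.single (c j) 1 * r j

/-- `x > v(Δ)`: writing `x = (h,w)` one has `w > c h`; by convention `⊤ > v(Δ)`. -/
def gtVal (x : WithTop (Lex (ℤ × Fin m))) (c : Fin m → ℤ) : Prop :=
  ∀ (w : ℤ) (h : Fin m), x = ↑(toLex (w, h)) → c h < w

/-- `x ≤ v(Δ)`: writing `x = (h,w)` one has `w ≤ c h`. -/
def leVal (x : WithTop (Lex (ℤ × Fin m))) (c : Fin m → ℤ) : Prop :=
  ∃ (w : ℤ) (h : Fin m), x = ↑(toLex (w, h)) ∧ w ≤ c h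

section IndexedValuation

variable {f g f' : LaurentSeries F} {i i' : Fin m}

theorem ivc_zero (i : Fin m) : ivc (0 : LaurentSeries F) i = ⊤ := by
  simp [ivc]

theorem ivc_of_ne_zero (hf : f ≠ 0) (i : Fin m) : ivc f i = ↑(toLex (f.order, i)) := by
  simp [ivc, hf]

theorem ivc_eq_top_iff : ivc f i = ⊤ ↔ f = 0 := by
  by_cases hf : f = 0 <;> simp [ivc, hf]

theorem ivc_lt_top_iff : ivc f i < ⊤ ↔ f ≠ 0 :=
  lt_top_iff_ne_top.trans ivc_eq_top_iff.not

theorem ivc_eq_map_orderTop (f : LaurentSeries F) (i : Fin m) :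
    ivc f i = f.orderTop.map fun w => toLex (w, i) := by
  by_cases hf : f = 0
  · simp [ivc, hf]
  · simp [ivc, hf, orderTop_of_ne_zero, order_of_ne hf]

theorem ivc_le_ivc_iff : ivc f i ≤ ivc g i ↔ f.orderTop ≤ g.orderTop := by
  simp only [ivc_eq_map_orderTop]
  exact WithTop.map_le_iff _ (by intro a b; simp [Prod.Lex.toLex_le_toLex]; omega)

theorem ivc_lt_ivc_iff : ivc f i < ivc g i ↔ f.orderTop < g.orderTop := by
  simp only [lt_iff_le_not_ge, ivc_le_ivc_iff]

theorem min_ivc_le_ivc_add : min (ivc f i) (ivc g i) ≤ ivc (f + g) i := by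
  rw [min_le_iff, ivc_le_ivc_iff, ivc_le_ivc_iff, ← min_le_iff]
  exact min_orderTop_le_orderTop_add

theorem ivc_add_eq_left (h : ivc f i < ivc g i) : ivc (f + g) i = ivc f i := by
  rw [ivc_eq_map_orderTop, orderTop_add_eq_left (ivc_lt_ivc_iff.1 h), ← ivc_eq_map_orderTop]

theorem le_ivc_sum {ι : Type*} {s : Finset ι} {u : ι → LaurentSeries F}
    {x : WithTop (Lex (ℤ × Fin m))} (h : ∀ b ∈ s, x ≤ ivc (u b) i) :
    x ≤ ivc (∑ b ∈ s, u b) i :=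
  Finset.sum_induction u (fun g => x ≤ ivc g i)
    (fun _ _ hf hg => (le_min hf hg).trans min_ivc_le_ivc_add) (by simp [ivc_zero]) h

theorem lt_ivc_sum {ι : Type*} {s : Finset ι} {u : ι → LaurentSeries F}
    {x : WithTop (Lex (ℤ × Fin m))} (hx : x < ⊤) (h : ∀ b ∈ s, x < ivc (u b) i) :
    x < ivc (∑ b ∈ s, u b) i :=
  Finset.sum_induction u (fun g => x < ivc g i)
    (fun _ _ hf hg => (lt_min hf hg).trans_le min_ivc_le_ivc_add) (by simpa [ivc_zero]) h

theorem ivc_sum_eq_of_lt {ι : Type*} [DecidableEq ι] {s : Finset ι} {u : ι → LaurentSeries F}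
    {a : ι} (ha : a ∈ s) (hua : u a ≠ 0)
    (h : ∀ b ∈ s, b ≠ a → u b ≠ 0 → ivc (u a) i < ivc (u b) i) :
    ivc (∑ b ∈ s, u b) i = ivc (u a) i := by
  rw [← Finset.add_sum_erase s u ha]
  refine ivc_add_eq_left (lt_ivc_sum (ivc_lt_top_iff.2 hua) fun b hb => ?_)
  by_cases hub : u b = 0
  · rw [hub, ivc_zero]
    exact ivc_lt_top_iff.2 hua
  · exact h b (Finset.mem_of_mem_erase hb) (Finset.ne_of_mem_erase hb) hub

theorem ivc_mul_le_ivc_mul (h : ivc f i ≤ ivc f' i') (g : LaurentSeries F) :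
    ivc (f * g) i ≤ ivc (f' * g) i' := by
  by_cases hf' : f' = 0
  · simp [hf', ivc_zero]
  by_cases hg : g = 0
  · simp [hg, ivc_zero]
  have hf : f ≠ 0 := by
    rintro rfl
    exact hf' (ivc_eq_top_iff.1 (top_le_iff.1 (ivc_zero (F := F) i ▸ h)))
  rw [ivc_of_ne_zero hf, ivc_of_ne_zero hf'] at h
  rw [ivc_of_ne_zero (mul_ne_zero hf hg), ivc_of_ne_zero (mul_ne_zero hf' hg), order_mul hf hg,
    order_mul hf' hg]
  simpa [Prod.Lex.toLex_le_toLex] using h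

theorem ivc_mul_lt_ivc_mul (h : ivc f i < ivc f' i') (hg : g ≠ 0) :
    ivc (f * g) i < ivc (f' * g) i' := by
  have hf : f ≠ 0 := ivc_lt_top_iff.1 (h.trans_le le_top)
  by_cases hf' : f' = 0
  · rw [hf', zero_mul, ivc_zero]
    exact ivc_lt_top_iff.2 (mul_ne_zero hf hg)
  rw [ivc_of_ne_zero hf, ivc_of_ne_zero hf'] at h
  rw [ivc_of_ne_zero (mul_ne_zero hf hg), ivc_of_ne_zero (mul_ne_zero hf' hg), order_mul hf hg,
    order_mul hf' hg]
  simpa [Prod.Lex.toLex_lt_toLex] using h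

theorem eq_of_ivc_eq (hf : f ≠ 0) (h : ivc f i = ivc g i') : i = i' := by
  have hg : g ≠ 0 := ivc_eq_top_iff.not.1 (h ▸ ivc_eq_top_iff.not.2 hf)
  rw [ivc_of_ne_zero hf, ivc_of_ne_zero hg] at h
  exact congrArg Prod.snd (toLex.injective (WithTop.coe_injective h))

theorem Iv_le_ivc (r : Fin m → LaurentSeries F) (i : Fin m) : Iv r ≤ ivc (r i) i :=
  Finset.inf_le (Finset.mem_univ i)

theorem Iv_eq_top_iff {r : Fin m → LaurentSeries F} : Iv r = ⊤ ↔ r = 0 := by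
  simp [Iv, ivc_eq_top_iff, funext_iff]

theorem exists_Iv_eq_ivc {r : Fin m → LaurentSeries F} (hr : r ≠ 0) :
    ∃ i, r i ≠ 0 ∧ Iv r = ivc (r i) i := by
  obtain ⟨i, -, hi⟩ := Finset.exists_mem_eq_inf Finset.univ
    (Finset.univ_nonempty_iff.2 ⟨(Function.ne_iff.1 hr).choose⟩) fun i => ivc (r i) i
  refine ⟨i, fun h0 => hr (Iv_eq_top_iff.1 ?_), hi⟩
  rw [Iv, hi, h0, ivc_zero]

end IndexedValuation

theorem Dmul_eq_zero_iff {c : Fin m → ℤ} {r : Fin m → LaurentSeries F} :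
    Dmul c r = 0 ↔ r = 0 := by
  simp [Dmul, funext_iff]

namespace IsBaseMatrix

variable {R : Matrix (Fin m) (Fin m) (LaurentSeries F)} {c : Fin m → ℤ}

theorem ivc_single_le (hR : IsBaseMatrix R c) (i j : Fin m) :
    ivc (single (c j) (1 : F)) j ≤ ivc (R i j) i := by
  rw [ivc_of_ne_zero (single_ne_zero one_ne_zero), order_single one_ne_zero, ← hR j]
  exact Iv_le_ivc _ i

theorem ivc_single_lt (hR : IsBaseMatrix R c) {i j : Fin m} (hij : i ≠ j) :
    ivc (single (c j) (1 : F)) j < ivc (R i j) i :=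
  (hR.ivc_single_le i j).lt_of_ne fun h => hij (eq_of_ivc_eq (single_ne_zero one_ne_zero) h).symm

theorem ivc_diag (hR : IsBaseMatrix R c) (j : Fin m) :
    ivc (R j j) j = ivc (single (c j) (1 : F)) j := by
  have hcol : Iv (fun i => R i j) ≠ ⊤ := by simp [hR j]
  obtain ⟨i, -, hIv⟩ := exists_Iv_eq_ivc (Iv_eq_top_iff.not.1 hcol)
  have hsingle : ivc (single (c j) (1 : F)) j = ivc (R i j) i := by
    rw [ivc_of_ne_zero (single_ne_zero one_ne_zero), order_single one_ne_zero, ← hR j, hIv]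
  obtain rfl := eq_of_ivc_eq (single_ne_zero one_ne_zero) hsingle
  exact hsingle.symm

theorem ivc_Dmul_le (hR : IsBaseMatrix R c) (r : Fin m → LaurentSeries F) (i j : Fin m) :
    ivc (Dmul c r j) j ≤ ivc (R i j * r j) i :=
  ivc_mul_le_ivc_mul (hR.ivc_single_le i j) (r j)

theorem ivc_Dmul_lt (hR : IsBaseMatrix R c) {r : Fin m → LaurentSeries F} {i j : Fin m}
    (hij : i ≠ j) (hr : r j ≠ 0) : ivc (Dmul c r j) j < ivc (R i j * r j) i :=
  ivc_mul_lt_ivc_mul (hR.ivc_single_lt hij) hr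

theorem ivc_diag_mul (hR : IsBaseMatrix R c) (r : Fin m → LaurentSeries F) (j : Fin m) :
    ivc (R j j * r j) j = ivc (Dmul c r j) j :=
  le_antisymm (ivc_mul_le_ivc_mul (hR.ivc_diag j).le (r j))
    (ivc_mul_le_ivc_mul (hR.ivc_diag j).ge (r j))

theorem Iv_Dmul_le_Iv_mulVec (hR : IsBaseMatrix R c) (r : Fin m → LaurentSeries F) :
    Iv (Dmul c r) ≤ Iv (R.mulVec r) :=
  Finset.le_inf fun i _ => by
    rw [Matrix.mulVec_apply_eq_sum]
    exact le_ivc_sum fun j _ => (Iv_le_ivc _ j).trans (hR.ivc_Dmul_le r i j)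

theorem Iv_mulVec_le_Iv_Dmul (hR : IsBaseMatrix R c) (r : Fin m → LaurentSeries F) :
    Iv (R.mulVec r) ≤ Iv (Dmul c r) := by
  by_cases hD : Dmul c r = 0
  · rw [hD, Iv_eq_top_iff.2 rfl]
    exact le_top
  obtain ⟨k, hDk, hIv⟩ := exists_Iv_eq_ivc hD
  have hdiag : R k k * r k ≠ 0 := by
    rw [← ivc_lt_top_iff (i := k), hR.ivc_diag_mul]
    exact ivc_lt_top_iff.2 hDk
  calc Iv (R.mulVec r) ≤ ivc (R.mulVec r k) k := Iv_le_ivc _ k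
    _ = ivc (R k k * r k) k :=
      ivc_sum_eq_of_lt (Finset.mem_univ k) hdiag fun j _ hjk hj => by
        rw [hR.ivc_diag_mul, ← hIv]
        exact (Iv_le_ivc _ j).trans_lt (hR.ivc_Dmul_lt (Ne.symm hjk) (right_ne_zero_of_mul hj))
    _ = Iv (Dmul c r) := by rw [hR.ivc_diag_mul, hIv]

theorem Iv_mulVec (hR : IsBaseMatrix R c) (r : Fin m → LaurentSeries F) :
    Iv (R.mulVec r) = Iv (Dmul c r) :=
  le_antisymm (hR.Iv_mulVec_le_Iv_Dmul r) (hR.Iv_Dmul_le_Iv_mulVec r)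

theorem isUnit (hR : IsBaseMatrix R c) : IsUnit R := by
  rw [Matrix.isUnit_iff_isUnit_det, isUnit_iff_ne_zero, Ne, ← Matrix.exists_mulVec_eq_zero_iff]
  rintro ⟨r, hr, hRr⟩
  refine hr (Dmul_eq_zero_iff (c := c) |>.1 (Iv_eq_top_iff.1 ?_))
  rw [← hR.Iv_mulVec, hRr, Iv_eq_top_iff]

end IsBaseMatrix

/-- A base matrix `R` is invertible, and `Iv(R·r) = Iv(Δ·r)` where `Δ` is the
`D`-component of `R`. -/
theorem stmt16 (F : Type*) [Field F] (m : ℕ)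
    (R : Matrix (Fin m) (Fin m) (LaurentSeries F)) (c : Fin m → ℤ)
    (hR : IsBaseMatrix R c) :
    IsUnit R ∧ ∀ r : Fin m → LaurentSeries F, Iv (R.mulVec r) = Iv (Dmul c r) :=
  ⟨hR.isUnit, hR.Iv_mulVec⟩

end
end
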